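/- The lattice D₁₂⁺ does not admit an orthonormal basis; that is, D₁₂⁺ is not isometric to the Euclidean lattice ℤ¹². -/

import Mathlib

open Matrix

/-- The lattice `D₁₂⁺ ⊂ ℚ¹²`: the span over `ℤ` of the `D₁₂` root lattice
(generated by the simple roots `eᵢ - eᵢ₊₁` for `i = 0,…,10` and `e₁₀ + e₁₁`)
together with the glue vector `(1/2, …, 1/2)`. -/
noncomputable def D12plus : Submodule ℤ (Fin 12 → ℚ) :=
  Submodule.span ℤ
    ((Set.range fun i : Fin 11 =>
        (Pi.single (Fin.castSucc i) (1 : ℚ) - Pi.single i.succ (1 : ℚ))) ∪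
      {Pi.single (10 : Fin 12) (1 : ℚ) + Pi.single (11 : Fin 12) (1 : ℚ),
        fun _ => (1 : ℚ) / 2})

/-
A norm-one vector of `D₁₂⁺` would be the preimage of a standard basis vector of `ℤ¹²`, but there
is none. An integral vector `y` of `D₁₂⁺` has even coordinate sum, and `∑ yᵢ² ≡ ∑ yᵢ (mod 2)`, so
its norm is even; every other vector has all twelve coordinates in `ℤ + 1/2`, so its norm is at
least `12 / 4 = 3`.
-/

-- For `4 ∣ card ι` this is `Dₙ⁺`; the uniform shift `c / 2` makes all coordinates integral or
-- all of them lie in `ℤ + 1/2`.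
def Dplus (ι : Type*) [Fintype ι] : Submodule ℤ (ι → ℚ) where
  carrier := {x | (∃ (z : ι → ℤ) (c : ℤ), ∀ i, x i = z i + c / 2) ∧ ∃ m : ℤ, ∑ i, x i = 2 * m}
  zero_mem' := ⟨⟨0, 0, by simp⟩, 0, by simp⟩
  add_mem' := by
    rintro x y ⟨⟨z, c, hz⟩, m, hm⟩ ⟨⟨w, d, hw⟩, n, hn⟩
    refine ⟨⟨z + w, c + d, fun i => ?_⟩, m + n, ?_⟩
    · simp only [Pi.add_apply, hz, hw, Int.cast_add]
      ring
    · simp only [Pi.add_apply, Finset.sum_add_distrib, hm, hn, Int.cast_add]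
      ring
  smul_mem' := by
    rintro k x ⟨⟨z, c, hz⟩, m, hm⟩
    refine ⟨⟨fun i => k * z i, k * c, fun i => ?_⟩, k * m, ?_⟩
    · simp only [Pi.smul_apply, zsmul_eq_mul, hz, Int.cast_mul]
      ring
    · simp only [Pi.smul_apply, zsmul_eq_mul, ← Finset.mul_sum, hm, Int.cast_mul]
      ring

theorem intCast_mem_Dplus {ι : Type*} [Fintype ι] (z : ι → ℤ) (hz : Even (∑ i, z i)) :
    (fun i => (z i : ℚ)) ∈ Dplus ι := by
  obtain ⟨m, hm⟩ := hz
  exact ⟨⟨z, 0, by simp⟩, m, by rw [← Int.cast_sum, hm, Int.cast_add]; ring⟩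

theorem D12plus_le_Dplus : D12plus ≤ Dplus (Fin 12) := by
  rw [D12plus, Submodule.span_le]
  rintro x (⟨i, rfl⟩ | rfl | rfl)
  · have hx : Pi.single (Fin.castSucc i) (1 : ℚ) - Pi.single i.succ 1 =
        fun j => ((Pi.single (Fin.castSucc i) 1 - Pi.single i.succ 1 : Fin 12 → ℤ) j : ℚ) := by
      ext j
      simp [Pi.single_apply]
    simp only [SetLike.mem_coe, hx]
    exact intCast_mem_Dplus _ (by simp [Finset.sum_sub_distrib])
  · have hx : Pi.single (10 : Fin 12) (1 : ℚ) + Pi.single 11 1 =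
        fun j => ((Pi.single 10 1 + Pi.single 11 1 : Fin 12 → ℤ) j : ℚ) := by
      ext j
      simp [Pi.single_apply]
    simp only [SetLike.mem_coe, hx]
    exact intCast_mem_Dplus _ (by simp [Finset.sum_add_distrib])
  · exact ⟨⟨0, 1, by simp⟩, 3, by norm_num⟩

theorem Int.sum_mul_self_ne_one_of_even_sum {ι : Type*} [Fintype ι] (y : ι → ℤ)
    (hy : Even (∑ i, y i)) : ∑ i, y i * y i ≠ 1 := by
  intro h
  have hdiff : Even (∑ i, y i * y i - ∑ i, y i) := by
    rw [← Finset.sum_sub_distrib]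
    exact Finset.even_sum _ fun i _ => by rw [← mul_sub_one]; exact Int.even_mul_pred_self _
  rw [h] at hdiff
  exact Int.not_even_one ((Int.even_sub.mp hdiff).mpr hy)

theorem quarter_le_halfInt_mul_self (y : ℤ) : (1 / 4 : ℚ) ≤ (y + 1 / 2) * (y + 1 / 2) := by
  have hy : (0 : ℚ) ≤ y * (y + 1) := by
    rcases le_or_gt 0 y with h | h
    · positivity
    · have : (y : ℚ) + 1 ≤ 0 := by exact_mod_cast h
      exact mul_nonneg_of_nonpos_of_nonpos (by exact_mod_cast h.le) this
  nlinarith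

theorem dotProduct_self_ne_one_of_mem_Dplus {ι : Type*} [Fintype ι] (hι : 4 < Fintype.card ι)
    {x : ι → ℚ} (hx : x ∈ Dplus ι) : x ⬝ᵥ x ≠ 1 := by
  obtain ⟨⟨z, c, hz⟩, m, hm⟩ := hx
  intro hnorm
  rcases Int.even_or_odd' c with ⟨k, rfl | rfl⟩
  · obtain rfl : x = fun i => ((z i + k : ℤ) : ℚ) := funext fun i => by rw [hz]; push_cast; ring
    refine Int.sum_mul_self_ne_one_of_even_sum (fun i => z i + k) ⟨m, ?_⟩ ?_
    · rw [← two_mul]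
      beta_reduce at hm
      exact_mod_cast hm
    · simp only [dotProduct] at hnorm
      exact_mod_cast hnorm
  · have hxy : ∀ i, x i = ((z i + k : ℤ) : ℚ) + 1 / 2 := fun i => by rw [hz]; push_cast; ring
    have : (Fintype.card ι : ℚ) / 4 ≤ x ⬝ᵥ x := by
      calc (Fintype.card ι : ℚ) / 4 = ∑ _i : ι, (1 / 4 : ℚ) := by simp; ring
        _ ≤ x ⬝ᵥ x := Finset.sum_le_sum fun i _ => by
          rw [hxy]; exact quarter_le_halfInt_mul_self _
    have : (4 : ℚ) < Fintype.card ι := by exact_mod_cast hι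
    linarith

/-- `D₁₂⁺` does not admit an orthonormal basis: there is no `ℤ`-linear isomorphism
from `D₁₂⁺` (with the restriction of the Euclidean inner product of `ℚ¹²`) to the
Euclidean lattice `ℤ¹²` preserving the bilinear forms. -/
theorem D12plus_not_isometric_to_Z12 :
    ¬ ∃ e : D12plus ≃ₗ[ℤ] (Fin 12 → ℤ),
      ∀ x y : D12plus, (x : Fin 12 → ℚ) ⬝ᵥ (y : Fin 12 → ℚ) = ((e x ⬝ᵥ e y : ℤ) : ℚ) := by
  rintro ⟨e, he⟩
  set v : D12plus := e.symm (Pi.single 0 1)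
  have hv : (v : Fin 12 → ℚ) ⬝ᵥ (v : Fin 12 → ℚ) = 1 := by
    rw [he, e.apply_symm_apply]
    simp
  exact dotProduct_self_ne_one_of_mem_Dplus (by simp) (D12plus_le_Dplus v.2) hv
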